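/- For a loop L with involution, any two of the following three properties imply the third: (1) the involution is central (a^* ∈ Z(L)a for all a); (2) the involution is normal (a^*a ∈ Z(L) for all a); (3) every square a² is central. -/

import Mathlib

universe u

class Loop (L : Type u) extends Mul L, One L where
  ldiv : L → L → L
  rdiv : L → L → L
  mul_ldiv : ∀ a b : L, a * ldiv a b = b
  ldiv_mul : ∀ a b : L, ldiv a (a * b) = b
  rdiv_mul : ∀ a b : L, rdiv b a * a = b
  mul_rdiv : ∀ a b : L, rdiv (b * a) a = b
  one_mul : ∀ a : L, 1 * a = a
  mul_one : ∀ a : L, a * 1 = a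

section Magma
variable {M : Type u} (mul : M → M → M)

/-- Left nucleus of a magma. -/
def leftNucS : Set M := {a | ∀ x y, mul (mul a x) y = mul a (mul x y)}
/-- Middle nucleus of a magma. -/
def midNucS : Set M := {a | ∀ x y, mul (mul x a) y = mul x (mul a y)}
/-- Right nucleus of a magma. -/
def rightNucS : Set M := {a | ∀ x y, mul (mul x y) a = mul x (mul y a)}
/-- Nucleus of a magma. -/
def nucS : Set M := leftNucS mul ∩ midNucS mul ∩ rightNucS mul
/-- Commutant (commutative center) of a magma. -/
def commutantS : Set M := {a | ∀ x, mul a x = mul x a}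
/-- Center of a magma: the commutant intersected with the nucleus. -/
def centerS : Set M := commutantS mul ∩ nucS mul
end Magma

namespace Loop
variable {L : Type u} [Loop L]

/-- The left inverse `a^λ`, satisfying `a^λ * a = 1`. -/
def linv (a : L) : L := Loop.rdiv 1 a
/-- The right inverse `a^ρ`, satisfying `a * a^ρ = 1`. -/
def rinv (a : L) : L := Loop.ldiv a 1
/-- The commutator `[a,b]`, defined by `a*b = (b*a)*[a,b]`. -/
def comm (a b : L) : L := Loop.ldiv (b*a) (a*b)
/-- The associator `[a,b,c]`, defined by `(a*b)*c = (a*(b*c))*[a,b,c]`. -/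
def assoc (a b c : L) : L := Loop.ldiv (a*(b*c)) ((a*b)*c)

end Loop

/-- The nucleus of a loop. -/
abbrev LNuc (L : Type u) [Loop L] : Set L := nucS (fun x y : L => x * y)
/-- The commutant of a loop. -/
abbrev LCommutant (L : Type u) [Loop L] : Set L := commutantS (fun x y : L => x * y)
/-- The center of a loop. -/
abbrev LCenter (L : Type u) [Loop L] : Set L := centerS (fun x y : L => x * y)

/-!
If `a^* = z a` with `z` central, then `a^* a = z (a a)`; the center of a loop is closed under
products and right inverses, so `a^* a` is central exactly when `a a` is. Conversely, if `a^* a`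
and `a a` are central, then `z = (a^* a) (a a)^ρ` is central and `z a = a^*` after cancelling `a`
on the right.
-/

theorem lCenter_eq_center {L : Type u} [Loop L] : LCenter L = Set.center L := by
  ext z
  constructor
  · rintro ⟨hc, ⟨hl, hm⟩, hr⟩
    exact ⟨hc, fun b c => (hl b c).symm, hr⟩
  · intro h
    exact ⟨fun a => h.comm a, ⟨fun b c => (h.left_assoc b c).symm, h.mid_assoc⟩, h.right_assoc⟩

namespace Loop

variable {L : Type u} [Loop L]

instance : IsCancelMul L where
  mul_left_cancel z a b h := by rw [← ldiv_mul z a, ← ldiv_mul z b]; exact congrArg (ldiv z) h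
  mul_right_cancel z a b h := by rw [← mul_rdiv z a, ← mul_rdiv z b]; exact congrArg (rdiv · z) h

theorem mul_rinv (a : L) : a * rinv a = 1 := mul_ldiv a 1

theorem rinv_mem_center {z : L} (hz : z ∈ Set.center L) : rinv z ∈ Set.center L := by
  have cancel_left : ∀ x, z * (rinv z * x) = x := fun x => by
    rw [hz.left_assoc, mul_rinv, Loop.one_mul]
  have cancel_right : ∀ x, z * (x * rinv z) = x := fun x => by
    rw [hz.left_comm, mul_rinv, Loop.mul_one]
  refine ⟨fun x => mul_left_cancel (a := z) ?_, fun b c => mul_left_cancel (a := z) ?_,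
    fun a b => mul_left_cancel (a := z) ?_⟩
  · rw [cancel_left, cancel_right]
  · rw [cancel_left, hz.left_assoc, cancel_left]
  · rw [cancel_right, hz.left_comm, cancel_right]

theorem mem_center_of_mul_mem_center {z w : L} (hz : z ∈ Set.center L)
    (hzw : z * w ∈ Set.center L) : w ∈ Set.center L := by
  have hi := rinv_mem_center hz
  have hw : rinv z * (z * w) = w := by
    rw [hi.left_assoc, ← (hz.comm _).eq, mul_rinv, Loop.one_mul]
  exact hw ▸ Set.mul_mem_center hi hzw

theorem mul_mul_mem_center_iff {z : L} (hz : z ∈ Set.center L) (a : L) :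
    z * a * a ∈ Set.center L ↔ a * a ∈ Set.center L := by
  rw [← hz.left_assoc]
  exact ⟨mem_center_of_mul_mem_center hz, Set.mul_mem_center hz⟩

theorem exists_mem_center_eq_mul {x a : L} (hxa : x * a ∈ Set.center L)
    (haa : a * a ∈ Set.center L) : ∃ z ∈ Set.center L, x = z * a := by
  have hi := rinv_mem_center haa
  refine ⟨x * a * rinv (a * a), Set.mul_mem_center hxa hi, mul_right_cancel (b := a) ?_⟩
  rw [← (Set.mul_mem_center hxa hi).left_assoc, ← hxa.left_assoc, (hi.comm _).eq, mul_rinv,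
    Loop.mul_one]

end Loop

theorem stmt19_general {L : Type u} [Loop L] (star : L → L) :
    (((∀ a : L, ∃ z ∈ LCenter L, star a = z * a) ∧
        (∀ a : L, star a * a ∈ LCenter L)) → (∀ a : L, a * a ∈ LCenter L)) ∧
    (((∀ a : L, ∃ z ∈ LCenter L, star a = z * a) ∧
        (∀ a : L, a * a ∈ LCenter L)) → (∀ a : L, star a * a ∈ LCenter L)) ∧
    (((∀ a : L, star a * a ∈ LCenter L) ∧
        (∀ a : L, a * a ∈ LCenter L)) → (∀ a : L, ∃ z ∈ LCenter L, star a = z * a)) := by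
  simp only [lCenter_eq_center]
  refine ⟨fun ⟨hcentral, hnormal⟩ a => ?_, fun ⟨hcentral, hsquare⟩ a => ?_,
    fun ⟨hnormal, hsquare⟩ a => Loop.exists_mem_center_eq_mul (hnormal a) (hsquare a)⟩
  · obtain ⟨z, hz, ha⟩ := hcentral a
    rw [← Loop.mul_mul_mem_center_iff hz, ← ha]
    exact hnormal a
  · obtain ⟨z, hz, ha⟩ := hcentral a
    rw [ha, Loop.mul_mul_mem_center_iff hz]
    exact hsquare a

/-- For a loop with involution, any two of the following imply the third:
the involution is central, the involution is normal, every square is central. -/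
theorem stmt19 {L : Type u} [Loop L] (star : L → L)
    (hstar2 : ∀ a : L, star (star a) = a)
    (hanti : ∀ a b : L, star (a * b) = star b * star a) :
    (((∀ a : L, ∃ z ∈ LCenter L, star a = z * a) ∧
        (∀ a : L, star a * a ∈ LCenter L)) → (∀ a : L, a * a ∈ LCenter L)) ∧
    (((∀ a : L, ∃ z ∈ LCenter L, star a = z * a) ∧
        (∀ a : L, a * a ∈ LCenter L)) → (∀ a : L, star a * a ∈ LCenter L)) ∧
    (((∀ a : L, star a * a ∈ LCenter L) ∧
        (∀ a : L, a * a ∈ LCenter L)) → (∀ a : L, ∃ z ∈ LCenter L, star a = z * a)) :=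
  stmt19_general star
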